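/- Let G₁(x) = −x₀⁴ + x₁⁴ + x₂⁴ + x₃⁴ + (1/10)x₄⁴ + (1/10)x₅⁴ and G₂(x) = −x₀² + (1/100)x₁² + (1/100)x₂² + (1/100)x₃² + x₄² + x₅², homogeneous polynomials on ℂ⁶. Then for every nonzero x ∈ ℂ⁶ with G₁(x) = 0 and G₂(x) = 0, the gradient vectors ∇G₁(x) = (−4x₀³, 4x₁³, 4x₂³, 4x₃³, (2/5)x₄³, (2/5)x₅³) and ∇G₂(x) = (−2x₀, (1/50)x₁, (1/50)x₂, (1/50)x₃, 2x₄, 2x₅) are linearly independent over ℂ. In particular the projective complete intersection Z(G₁, G₂) ⊂ ℂP⁵ (the variety called CICY2) is smooth. -/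

import Mathlib

/-- The quartic defining `CICY2`. -/
noncomputable def G₁ (x : Fin 6 → ℂ) : ℂ :=
  -x 0 ^ 4 + x 1 ^ 4 + x 2 ^ 4 + x 3 ^ 4 + (1 / 10 : ℂ) * x 4 ^ 4 + (1 / 10 : ℂ) * x 5 ^ 4

/-- The quadric defining `CICY2`. -/
noncomputable def G₂ (x : Fin 6 → ℂ) : ℂ :=
  -x 0 ^ 2 + (1 / 100 : ℂ) * x 1 ^ 2 + (1 / 100 : ℂ) * x 2 ^ 2 + (1 / 100 : ℂ) * x 3 ^ 2
    + x 4 ^ 2 + x 5 ^ 2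

/-- The holomorphic gradient of `G₁`. -/
noncomputable def gradG₁ (x : Fin 6 → ℂ) : Fin 6 → ℂ :=
  ![-4 * x 0 ^ 3, 4 * x 1 ^ 3, 4 * x 2 ^ 3, 4 * x 3 ^ 3, (2 / 5 : ℂ) * x 4 ^ 3,
    (2 / 5 : ℂ) * x 5 ^ 3]

/-- The holomorphic gradient of `G₂`. -/
noncomputable def gradG₂ (x : Fin 6 → ℂ) : Fin 6 → ℂ :=
  ![-2 * x 0, (1 / 50 : ℂ) * x 1, (1 / 50 : ℂ) * x 2, (1 / 50 : ℂ) * x 3, 2 * x 4, 2 * x 5]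

/-!
Both forms are diagonal, `G₁ = ∑ aᵢ xᵢ⁴` and `G₂ = ∑ bᵢ xᵢ²`. If `s ∇G₁ + t ∇G₂ = 0`, then at each
coordinate with `xᵢ ≠ 0` we get `2 s aᵢ xᵢ² = -t bᵢ`; weighting these by `bᵢ / aᵢ` and summing,
`G₂(x) = 0` leaves `t ∑ bᵢ² / aᵢ = 0`, the sum running over the nonempty support of `x`. For the
CICY2 weights the ratios `bᵢ² / aᵢ` are `-1, 10⁻⁴, 10⁻⁴, 10⁻⁴, 10, 10`, which have no vanishing
nonempty subsum, so `t = 0`, and then `s = 0`.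
-/

open Finset

theorem linearIndependent_diagonal_gradients {K ι : Type*} [Field K] [Fintype ι]
    {α β x : ι → K} (hα : ∀ i, α i ≠ 0)
    (hβα : ∀ S : Finset ι, S.Nonempty → ∑ i ∈ S, β i ^ 2 / α i ≠ 0)
    (hx : x ≠ 0) (hq : ∑ i, β i * x i ^ 2 = 0) :
    LinearIndependent K ![fun i ↦ α i * x i ^ 3, fun i ↦ β i * x i] := by
  classical
  rw [LinearIndependent.pair_iff]
  intro s t hst
  set S := univ.filter fun i ↦ x i ≠ 0
  obtain ⟨j, hj⟩ : S.Nonempty := by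
    obtain ⟨j, hj⟩ := Function.ne_iff.mp hx
    exact ⟨j, mem_filter.mpr ⟨mem_univ j, hj⟩⟩
  have hS : ∀ i ∈ S, s * α i * x i ^ 2 + t * β i = 0 := fun i hi ↦ by
    have hcoord : x i * (s * α i * x i ^ 2 + t * β i) = 0 := by
      have := congrFun hst i
      simp only [Pi.add_apply, Pi.smul_apply, smul_eq_mul, Pi.zero_apply] at this
      linear_combination this
    exact (mul_eq_zero.mp hcoord).resolve_left (mem_filter.mp hi).2
  have hqS : ∑ i ∈ S, β i * x i ^ 2 = 0 := by
    rw [sum_filter_of_ne fun i _ h hxi ↦ by simp [hxi] at h, hq]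
  have htS : t * ∑ i ∈ S, β i ^ 2 / α i = 0 := calc
    t * ∑ i ∈ S, β i ^ 2 / α i
        = ∑ i ∈ S, (β i / α i * (s * α i * x i ^ 2 + t * β i) - s * (β i * x i ^ 2)) := by
      rw [mul_sum]
      refine sum_congr rfl fun i _ ↦ ?_
      field_simp [hα i]
      ring
    _ = 0 := by
      rw [sum_sub_distrib, ← mul_sum, hqS, sum_eq_zero fun i hi ↦ by rw [hS i hi, mul_zero]]
      ring
  have ht : t = 0 := (mul_eq_zero.mp htS).resolve_right (hβα S ⟨j, hj⟩)
  refine ⟨?_, ht⟩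
  have hsj : s * (α j * x j ^ 2) = 0 := by linear_combination hS j hj - β j * ht
  exact (mul_eq_zero.mp hsj).resolve_right
    (mul_ne_zero (hα j) (pow_ne_zero 2 (mem_filter.mp hj).2))

lemma gradG₁_eq (x : Fin 6 → ℂ) :
    gradG₁ x = fun i ↦ ![-4, 4, 4, 4, 2 / 5, 2 / 5] i * x i ^ 3 := by
  funext i
  fin_cases i <;> simp [gradG₁]

lemma gradG₂_eq (x : Fin 6 → ℂ) :
    gradG₂ x = fun i ↦ ![-2, 1 / 50, 1 / 50, 1 / 50, 2, 2] i * x i := by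
  funext i
  fin_cases i <;> simp [gradG₂]

lemma sum_gradG₂_weights_mul_sq (x : Fin 6 → ℂ) :
    ∑ i, ![-2, 1 / 50, 1 / 50, 1 / 50, 2, 2] i * x i ^ 2 = 2 * G₂ x := by
  simp only [Fin.sum_univ_six, G₂, Matrix.cons_val]
  ring

lemma sum_sq_div_gradG_weights_ne_zero (S : Finset (Fin 6)) (hS : S.Nonempty) :
    ∑ i ∈ S, (![-2, 1 / 50, 1 / 50, 1 / 50, 2, 2] i : ℂ) ^ 2 / ![-4, 4, 4, 4, 2 / 5, 2 / 5] i
      ≠ 0 := by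
  -- `10000 bᵢ² / aᵢ`
  have hint : ∀ S : Finset (Fin 6), S.Nonempty →
      ∑ i ∈ S, (![-10000, 1, 1, 1, 100000, 100000] : Fin 6 → ℤ) i ≠ 0 := by decide
  have hcast : ∑ i ∈ S, (![-2, 1 / 50, 1 / 50, 1 / 50, 2, 2] i : ℂ) ^ 2
        / ![-4, 4, 4, 4, 2 / 5, 2 / 5] i
      = ((∑ i ∈ S, (![-10000, 1, 1, 1, 100000, 100000] : Fin 6 → ℤ) i : ℤ) : ℂ) / 10000 := by
    rw [Int.cast_sum, sum_div]
    refine sum_congr rfl fun i _ ↦ ?_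
    fin_cases i <;> norm_num
  rw [hcast]
  exact div_ne_zero (Int.cast_ne_zero.mpr (hint S hS)) (by norm_num)

theorem stmt_7_general (x : Fin 6 → ℂ) (hx : x ≠ 0) (h2 : G₂ x = 0) :
    LinearIndependent ℂ ![gradG₁ x, gradG₂ x] := by
  rw [gradG₁_eq, gradG₂_eq]
  refine linearIndependent_diagonal_gradients (fun i ↦ ?_) sum_sq_div_gradG_weights_ne_zero hx ?_
  · fin_cases i <;> norm_num
  · rw [sum_gradG₂_weights_mul_sq, h2, mul_zero]

/-- At every nonzero common zero `x ∈ ℂ⁶` of `G₁` and `G₂`, the gradient vectors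
`∇G₁(x)` and `∇G₂(x)` are linearly independent over `ℂ`; in particular the projective
complete intersection `Z(G₁, G₂) ⊂ ℂP⁵` (the variety `CICY2`) is smooth. -/
theorem stmt_7 (x : Fin 6 → ℂ) (hx : x ≠ 0) (h1 : G₁ x = 0) (h2 : G₂ x = 0) :
    LinearIndependent ℂ ![gradG₁ x, gradG₂ x] :=
  stmt_7_general x hx h2
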